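/- Let (C_i)_{i∈ℕ}, (A_i)_{i∈ℕ}, (B_i)_{i∈ℕ} be inverse systems of abelian groups indexed by the natural numbers, together with morphisms of inverse systems f_i : C_i → A_i and g_i : A_i → B_i such that for every i the sequence C_i → A_i → B_i → 0 is exact (i.e. g_i is surjective and the image of f_i equals the kernel of g_i). Assume: (a) every transition map C_{i+1} → C_i is surjective; and (b) there exist a positive integer M and an integer N such that for all i ≥ N + M the transition map of the inverse system of kernels ker f_i → ker f_{i−M} (the restriction of the composite transition map C_i → C_{i−M}) is the zero homomorphism. Then the induced sequence of inverse limits 0 → lim_i C_i → lim_i A_i → lim_i B_i → 0 is exact; in particular lim_i C_i → lim_i A_i is injective and lim_i A_i → lim_i B_i is surjective. -/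

import Mathlib

/-!
The map `lim C → lim A` is injective because a compatible sequence `x` in the kernel satisfies
`x i = (image of x (N + M + i))`, and this image factors through `ker f_{N+M+i} → ker f_{N+i}`,
which is zero. For exactness at `lim A`, lift each `a i` to some `c i ∈ C i`; the lifts need not
be compatible, but consecutive ones differ by an element of a kernel, so pushing `c (N + M + i)`
down to level `i` kills the discrepancy and yields a compatible lift. Surjectivity onto `lim B`
is the usual step-by-step lifting: a lift at level `i + 1` of `b (i + 1)` can be corrected by an
element of `f (C (i + 1))` to lie over the lift at level `i`, because `C (i + 1) → C i` is onto.
-/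

/-- The composite transition map `C j →+ C i` (for `i ≤ j`) of an inverse system of
abelian groups with one-step transition maps `cT i : C (i+1) →+ C i`. -/
noncomputable def compTrans {C : ℕ → Type*} [∀ i, AddCommGroup (C i)]
    (cT : ∀ i, C (i + 1) →+ C i) {i j : ℕ} (h : i ≤ j) : C j →+ C i :=
  Nat.leRecOn h (fun {k} (g : C k →+ C i) => g.comp (cT k)) (AddMonoidHom.id (C i))

def IsCompatibleSeq {C : ℕ → Type*} [∀ i, AddCommGroup (C i)] (cT : ∀ i, C (i + 1) →+ C i)
    (x : ∀ i, C i) : Prop :=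
  ∀ i, cT i (x (i + 1)) = x i

section CompTrans

variable {C A : ℕ → Type*} [∀ i, AddCommGroup (C i)] [∀ i, AddCommGroup (A i)]
  (cT : ∀ i, C (i + 1) →+ C i)

theorem compTrans_self (i : ℕ) : compTrans cT (le_refl i) = AddMonoidHom.id (C i) :=
  Nat.leRecOn_self _

theorem compTrans_succ {i j : ℕ} (h : i ≤ j) :
    compTrans cT (h.trans j.le_succ) = (compTrans cT h).comp (cT j) :=
  Nat.leRecOn_succ h _

theorem compTrans_le_succ (i : ℕ) : compTrans cT i.le_succ = cT i := by
  rw [compTrans_succ cT (le_refl i), compTrans_self]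
  rfl

theorem compTrans_compTrans {i j k : ℕ} (hij : i ≤ j) (hjk : j ≤ k) (x : C k) :
    compTrans cT hij (compTrans cT hjk x) = compTrans cT (hij.trans hjk) x := by
  induction k, hjk using Nat.le_induction with
  | base => rw [compTrans_self]; rfl
  | succ k hjk ih =>
    rw [compTrans_succ cT hjk, compTrans_succ cT (hij.trans hjk)]
    exact ih (cT k x)

theorem compTrans_apply_of_isCompatibleSeq {x : ∀ i, C i} (hx : IsCompatibleSeq cT x)
    {i j : ℕ} (h : i ≤ j) : compTrans cT h (x j) = x i := by
  induction j, h using Nat.le_induction with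
  | base => rw [compTrans_self]; rfl
  | succ j h ih => rw [compTrans_succ cT h, AddMonoidHom.comp_apply, hx j, ih]

variable {cT} {aT : ∀ i, A (i + 1) →+ A i} {f : ∀ i, C i →+ A i}

theorem map_compTrans (hf : ∀ i, (f i).comp (cT i) = (aT i).comp (f (i + 1)))
    {i j : ℕ} (h : i ≤ j) (x : C j) :
    f i (compTrans cT h x) = compTrans aT h (f j x) := by
  induction j, h using Nat.le_induction with
  | base => rw [compTrans_self, compTrans_self]; rfl
  | succ j h ih =>
    rw [compTrans_succ cT h, compTrans_succ aT h, AddMonoidHom.comp_apply,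
      AddMonoidHom.comp_apply, ih, ← AddMonoidHom.comp_apply (f j), hf j]
    rfl

section EventuallyZeroKernels

variable {M N : ℕ}
  (hker : ∀ i, N + M ≤ i → ∀ x : C i, f i x = 0 → compTrans cT (Nat.sub_le i M) x = 0)
include hker

theorem compTrans_eq_zero_of_map_eq_zero {i j : ℕ} (hij : N + M + i ≤ j) {x : C j}
    (hx : f j x = 0) : compTrans cT ((Nat.le_add_left i (N + M)).trans hij) x = 0 := by
  rw [← compTrans_compTrans cT (by omega : i ≤ j - M) (Nat.sub_le j M),
    hker j (by omega) x hx, map_zero]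

theorem compTrans_eq_of_map_eq {i j : ℕ} (hij : N + M + i ≤ j) {x y : C j}
    (hxy : f j x = f j y) : compTrans cT ((Nat.le_add_left i (N + M)).trans hij) x =
      compTrans cT ((Nat.le_add_left i (N + M)).trans hij) y := by
  rw [← sub_eq_zero, ← map_sub]
  exact compTrans_eq_zero_of_map_eq_zero hker hij (by rw [map_sub, hxy, sub_self])

theorem eq_zero_of_isCompatibleSeq_of_map_eq_zero {x : ∀ i, C i}
    (hx : IsCompatibleSeq cT x) (hfx : ∀ i, f i (x i) = 0) (i : ℕ) : x i = 0 := by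
  rw [← compTrans_apply_of_isCompatibleSeq cT hx (Nat.le_add_left i (N + M)),
    compTrans_eq_zero_of_map_eq_zero hker le_rfl (hfx _)]

theorem exists_isCompatibleSeq_map_eq
    (hf : ∀ i, (f i).comp (cT i) = (aT i).comp (f (i + 1)))
    {a : ∀ i, A i} (ha : IsCompatibleSeq aT a) (hmem : ∀ i, a i ∈ (f i).range) :
    ∃ x : ∀ i, C i, IsCompatibleSeq cT x ∧ ∀ i, f i (x i) = a i := by
  choose c hc using hmem
  refine ⟨fun i => compTrans cT (Nat.le_add_left i (N + M)) (c (N + M + i)), fun i => ?_,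
    fun i => ?_⟩
  · have hlift : f (N + M + i) (cT _ (c (N + M + i + 1))) = f (N + M + i) (c (N + M + i)) := by
      rw [← AddMonoidHom.comp_apply, hf, AddMonoidHom.comp_apply, hc, hc, ha]
    change cT i (compTrans cT _ (c (N + M + i + 1))) = _
    rw [← compTrans_le_succ cT i, compTrans_compTrans,
      compTrans_succ cT (Nat.le_add_left i (N + M)), AddMonoidHom.comp_apply]
    exact compTrans_eq_of_map_eq hker le_rfl hlift
  · rw [map_compTrans hf, hc, compTrans_apply_of_isCompatibleSeq aT ha]

end EventuallyZeroKernels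

end CompTrans

theorem exists_seq_of_forall_exists_lift {X : ℕ → Type*}
    (T : ∀ i, X (i + 1) → X i) (P : ∀ i, X i → Prop) (h₀ : ∃ x, P 0 x)
    (hlift : ∀ i x, P i x → ∃ y, P (i + 1) y ∧ T i y = x) :
    ∃ x : ∀ i, X i, (∀ i, T i (x (i + 1)) = x i) ∧ ∀ i, P i (x i) := by
  choose x₀ hx₀ using h₀
  choose lift hlift_P hlift_T using hlift
  let x : ∀ i, {x : X i // P i x} :=
    fun i => Nat.rec ⟨x₀, hx₀⟩ (fun n p => ⟨lift n p.1 p.2, hlift_P n p.1 p.2⟩) i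
  exact ⟨fun i => (x i).1, fun i => hlift_T i (x i).1 (x i).2, fun i => (x i).2⟩

theorem exists_lift_of_surjective {C A B : ℕ → Type*}
    [∀ i, AddCommGroup (C i)] [∀ i, AddCommGroup (A i)] [∀ i, AddCommGroup (B i)]
    {cT : ∀ i, C (i + 1) →+ C i} {aT : ∀ i, A (i + 1) →+ A i} {bT : ∀ i, B (i + 1) →+ B i}
    {f : ∀ i, C i →+ A i} {g : ∀ i, A i →+ B i}
    (hf : ∀ i, (f i).comp (cT i) = (aT i).comp (f (i + 1)))
    (hg : ∀ i, (g i).comp (aT i) = (bT i).comp (g (i + 1)))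
    (h_exact : ∀ i, (f i).range = (g i).ker) (hg_surj : ∀ i, Function.Surjective (g i))
    (hcT_surj : ∀ i, Function.Surjective (cT i))
    {b : ∀ i, B i} (hb : IsCompatibleSeq bT b) (i : ℕ) (x : A i) (hx : g i x = b i) :
    ∃ y : A (i + 1), g (i + 1) y = b (i + 1) ∧ aT i y = x := by
  obtain ⟨y, hy⟩ := hg_surj (i + 1) (b (i + 1))
  have hdiff : aT i y - x ∈ (g i).ker := by
    rw [AddMonoidHom.mem_ker, map_sub, ← AddMonoidHom.comp_apply, hg, AddMonoidHom.comp_apply,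
      hy, hb, hx, sub_self]
  obtain ⟨d, hd⟩ := h_exact i ▸ hdiff
  obtain ⟨d', rfl⟩ := hcT_surj i d
  have hd' : f (i + 1) d' ∈ (g (i + 1)).ker := h_exact (i + 1) ▸ ⟨d', rfl⟩
  refine ⟨y - f (i + 1) d', by rw [map_sub, hy, hd', sub_zero], ?_⟩
  rw [map_sub, ← AddMonoidHom.comp_apply, ← hf, AddMonoidHom.comp_apply, hd, sub_sub_cancel]

theorem limit_exact_of_surjective_transitions_and_eventually_zero_kernels_general
    (C A B : ℕ → Type*)
    [∀ i, AddCommGroup (C i)] [∀ i, AddCommGroup (A i)] [∀ i, AddCommGroup (B i)]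
    -- transition maps of the three inverse systems
    (cT : ∀ i, C (i + 1) →+ C i) (aT : ∀ i, A (i + 1) →+ A i) (bT : ∀ i, B (i + 1) →+ B i)
    -- morphisms of inverse systems
    (f : ∀ i, C i →+ A i) (g : ∀ i, A i →+ B i)
    (hf_compat : ∀ i, (f i).comp (cT i) = (aT i).comp (f (i + 1)))
    (hg_compat : ∀ i, (g i).comp (aT i) = (bT i).comp (g (i + 1)))
    -- each level `C_i → A_i → B_i → 0` is exact
    (h_exact : ∀ i, (f i).range = (g i).ker)
    (hg_surj : ∀ i, Function.Surjective (g i))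
    -- (a) the transition maps of `C` are surjective
    (hcT_surj : ∀ i, Function.Surjective (cT i))
    -- (b) for `i ≥ N + M`, the restriction of the composite transition map
    -- `C_i → C_{i−M}` to `ker f_i` is zero
    (M : ℕ) (N : ℕ)
    (hker_zero : ∀ i, N + M ≤ i → ∀ x : C i, f i x = 0 →
      compTrans cT (Nat.sub_le i M) x = 0) :
    -- exactness at `lim C_i`: the induced map `lim C_i → lim A_i` is injective
    (∀ x : ∀ i, C i, (∀ i, cT i (x (i + 1)) = x i) →
      (∀ i, f i (x i) = 0) → ∀ i, x i = 0) ∧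
    -- exactness at `lim A_i`: the kernel of `lim A_i → lim B_i` equals the image of
    -- `lim C_i → lim A_i`
    (∀ a : ∀ i, A i, (∀ i, aT i (a (i + 1)) = a i) →
      ((∀ i, g i (a i) = 0) ↔
        ∃ x : ∀ i, C i, (∀ i, cT i (x (i + 1)) = x i) ∧ ∀ i, f i (x i) = a i)) ∧
    -- exactness at `lim B_i`: the induced map `lim A_i → lim B_i` is surjective
    (∀ b : ∀ i, B i, (∀ i, bT i (b (i + 1)) = b i) →
      ∃ a : ∀ i, A i, (∀ i, aT i (a (i + 1)) = a i) ∧ ∀ i, g i (a i) = b i) := by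
  refine ⟨fun x hx => eq_zero_of_isCompatibleSeq_of_map_eq_zero hker_zero hx,
    fun a ha => ⟨fun hga => ?_, ?_⟩, fun b hb => ?_⟩
  · exact exists_isCompatibleSeq_map_eq hker_zero hf_compat ha
      fun i => (h_exact i).symm ▸ hga i
  · rintro ⟨x, -, hxa⟩ i
    exact (h_exact i).le ⟨x i, hxa i⟩
  · exact exists_seq_of_forall_exists_lift (aT · ·) (fun i x => g i x = b i)
      (hg_surj 0 (b 0))
      (exists_lift_of_surjective hf_compat hg_compat h_exact hg_surj hcT_surj hb)

theorem limit_exact_of_surjective_transitions_and_eventually_zero_kernels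
    (C A B : ℕ → Type*)
    [∀ i, AddCommGroup (C i)] [∀ i, AddCommGroup (A i)] [∀ i, AddCommGroup (B i)]
    -- transition maps of the three inverse systems
    (cT : ∀ i, C (i + 1) →+ C i) (aT : ∀ i, A (i + 1) →+ A i) (bT : ∀ i, B (i + 1) →+ B i)
    -- morphisms of inverse systems
    (f : ∀ i, C i →+ A i) (g : ∀ i, A i →+ B i)
    (hf_compat : ∀ i, (f i).comp (cT i) = (aT i).comp (f (i + 1)))
    (hg_compat : ∀ i, (g i).comp (aT i) = (bT i).comp (g (i + 1)))
    -- each level `C_i → A_i → B_i → 0` is exact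
    (h_exact : ∀ i, (f i).range = (g i).ker)
    (hg_surj : ∀ i, Function.Surjective (g i))
    -- (a) the transition maps of `C` are surjective
    (hcT_surj : ∀ i, Function.Surjective (cT i))
    -- (b) for `i ≥ N + M`, the restriction of the composite transition map
    -- `C_i → C_{i−M}` to `ker f_i` is zero
    (M : ℕ) (hM : 0 < M) (N : ℕ)
    (hker_zero : ∀ i, N + M ≤ i → ∀ x : C i, f i x = 0 →
      compTrans cT (Nat.sub_le i M) x = 0) :
    -- exactness at `lim C_i`: the induced map `lim C_i → lim A_i` is injective
    (∀ x : ∀ i, C i, (∀ i, cT i (x (i + 1)) = x i) →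
      (∀ i, f i (x i) = 0) → ∀ i, x i = 0) ∧
    -- exactness at `lim A_i`: the kernel of `lim A_i → lim B_i` equals the image of
    -- `lim C_i → lim A_i`
    (∀ a : ∀ i, A i, (∀ i, aT i (a (i + 1)) = a i) →
      ((∀ i, g i (a i) = 0) ↔
        ∃ x : ∀ i, C i, (∀ i, cT i (x (i + 1)) = x i) ∧ ∀ i, f i (x i) = a i)) ∧
    -- exactness at `lim B_i`: the induced map `lim A_i → lim B_i` is surjective
    (∀ b : ∀ i, B i, (∀ i, bT i (b (i + 1)) = b i) →
      ∃ a : ∀ i, A i, (∀ i, aT i (a (i + 1)) = a i) ∧ ∀ i, g i (a i) = b i) :=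
  limit_exact_of_surjective_transitions_and_eventually_zero_kernels_general C A B cT aT bT f g
    hf_compat hg_compat h_exact hg_surj hcT_surj M N hker_zero
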